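/- arXiv:1108.5716 — 6 statements merged into one kernel-verified Lean document; each statement's English description precedes it below -/
import Mathlib

section
/- Let (X,𝒜,μ) be a measure space, let δ : X → [0,∞) be measurable and let ν = μ.withDensity δ. Let (Φ_n)_{n∈ℕ} be functions in L²(μ) with ∫ Φ_n Φ_m dμ = δ_{n,m} (Kronecker delta) for all n,m ∈ ℕ, and set Φ_{−1} := 0. Let A, B : ℕ → ℝ with B_0 = 0, let Λ : ℕ → ℝ and set Λ_{−1} := 0. Define φ_n = A_n Φ_n + B_n Φ_{n−1}. Suppose ψ_n : X → ℝ are measurable functions satisfying δ·ψ_n = Λ_n A_n Φ_n + Λ_{n−1} B_n Φ_{n−1} μ-almost everywhere. Then for all n, m ∈ ℕ the function ψ_n φ_m is ν-integrable and ∫ ψ_n φ_m dν = Λ_n A_n B_{n+1} δ_{m,n+1} + (Λ_n A_n² + Λ_{n−1} B_n²) δ_{m,n} + Λ_{n−1} A_{n−1} B_n δ_{m,n−1}. -/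
open MeasureTheory
open scoped NNReal ENNReal

/-- Tridiagonalisation: the matrix of `T = δ⁻¹ L` in the system `φ_n = A_n Φ_n + B_n Φ_{n-1}`
with respect to the inner product of `L²(ν)`, `ν = μ.withDensity δ`, is tridiagonal. Here
`ψ_n` represents `T φ_n`, i.e. `δ ψ_n = Λ_n A_n Φ_n + Λ_{n-1} B_n Φ_{n-1}` μ-a.e. -/
theorem stmt_0 {X : Type*} [MeasurableSpace X] (μ : Measure X)
    (δ : X → ℝ≥0) (hδ : Measurable δ)
    (Φ : ℕ → X → ℝ) (hΦmeas : ∀ n, Measurable (Φ n))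
    (hΦint : ∀ n m, Integrable (fun x => Φ n x * Φ m x) μ)
    (hΦortho : ∀ n m, ∫ x, Φ n x * Φ m x ∂μ = if n = m then 1 else 0)
    (A B Λ : ℕ → ℝ) (hB0 : B 0 = 0)
    (φ : ℕ → X → ℝ)
    (hφ : ∀ n x, φ n x = A n * Φ n x + B n * Φ (n - 1) x)
    (ψ : ℕ → X → ℝ) (hψmeas : ∀ n, Measurable (ψ n))
    (hψ : ∀ n, ∀ᵐ x ∂μ,
      (δ x : ℝ) * ψ n x
        = Λ n * A n * Φ n x + (if n = 0 then 0 else Λ (n - 1)) * B n * Φ (n - 1) x) :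
    ∀ n m : ℕ,
      Integrable (fun x => ψ n x * φ m x) (μ.withDensity fun x => (δ x : ℝ≥0∞)) ∧
      ∫ x, ψ n x * φ m x ∂(μ.withDensity fun x => (δ x : ℝ≥0∞))
        = Λ n * A n * B (n + 1) * (if m = n + 1 then 1 else 0)
          + (Λ n * A n ^ 2 + (if n = 0 then 0 else Λ (n - 1)) * B n ^ 2)
              * (if m = n then 1 else 0)
          + (if n = 0 then 0
             else Λ (n - 1) * A (n - 1) * B n * (if m = n - 1 then 1 else 0)) := by
  intro n m
  set c : ℝ := if n = 0 then 0 else Λ (n - 1) with hc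
  -- the expanded product, integrable w.r.t. μ
  have key : (fun x => (Λ n * A n * Φ n x + c * B n * Φ (n - 1) x)
        * (A m * Φ m x + B m * Φ (m - 1) x))
      = fun x => (Λ n * A n * A m) * (Φ n x * Φ m x)
          + (Λ n * A n * B m) * (Φ n x * Φ (m - 1) x)
          + (c * B n * A m) * (Φ (n - 1) x * Φ m x)
          + (c * B n * B m) * (Φ (n - 1) x * Φ (m - 1) x) := by
    funext x; ring
  have hg : Integrable (fun x => (Λ n * A n * Φ n x + c * B n * Φ (n - 1) x)
      * (A m * Φ m x + B m * Φ (m - 1) x)) μ := by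
    rw [key]
    exact (((hΦint n m).const_mul _ |>.add ((hΦint n (m - 1)).const_mul _)).add
      ((hΦint (n - 1) m).const_mul _)).add ((hΦint (n - 1) (m - 1)).const_mul _)
  have hae : (fun x => δ x • (ψ n x * φ m x))
      =ᵐ[μ] fun x => (Λ n * A n * Φ n x + c * B n * Φ (n - 1) x)
        * (A m * Φ m x + B m * Φ (m - 1) x) := by
    filter_upwards [hψ n] with x hx
    have : δ x • (ψ n x * φ m x) = ((δ x : ℝ) * ψ n x) * φ m x := by
      simp [NNReal.smul_def]; ring
    rw [this, hx, hφ m x, hc]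
  have hint : Integrable (fun x => ψ n x * φ m x)
      (μ.withDensity fun x => (δ x : ℝ≥0∞)) := by
    rw [integrable_withDensity_iff_integrable_smul hδ]
    exact hg.congr hae.symm
  refine ⟨hint, ?_⟩
  rw [integral_withDensity_eq_integral_smul hδ, integral_congr_ae hae, key]
  have h1 : Integrable (fun x => Λ n * A n * A m * (Φ n x * Φ m x)) μ :=
    (hΦint n m).const_mul _
  have h2 : Integrable (fun x => Λ n * A n * B m * (Φ n x * Φ (m - 1) x)) μ :=
    (hΦint n (m - 1)).const_mul _
  have h3 : Integrable (fun x => c * B n * A m * (Φ (n - 1) x * Φ m x)) μ :=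
    (hΦint (n - 1) m).const_mul _
  have h4 : Integrable (fun x => c * B n * B m * (Φ (n - 1) x * Φ (m - 1) x)) μ :=
    (hΦint (n - 1) (m - 1)).const_mul _
  have h12 : Integrable (fun x => Λ n * A n * A m * (Φ n x * Φ m x)
      + Λ n * A n * B m * (Φ n x * Φ (m - 1) x)) μ := h1.add h2
  have h123 : Integrable (fun x => Λ n * A n * A m * (Φ n x * Φ m x)
      + Λ n * A n * B m * (Φ n x * Φ (m - 1) x)
      + c * B n * A m * (Φ (n - 1) x * Φ m x)) μ := h12.add h3
  rw [integral_add h123 h4, integral_add h12 h3, integral_add h1 h2,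
    integral_const_mul, integral_const_mul, integral_const_mul, integral_const_mul,
    hΦortho, hΦortho, hΦortho, hΦortho]
  clear h1 h2 h3 h4 h12 h123 hg hae hint key hψ hΦint hΦortho hφ hΦmeas hψmeas hδ
  rcases n with _ | n <;> rcases m with _ | m <;>
      simp only [hc, Nat.succ_ne_zero, Nat.succ_sub_one, Nat.zero_sub, Nat.sub_zero,
        reduceIte, hB0, if_true, if_false]
  · rw [if_neg (by omega)]; ring
  · split_ifs <;>
      first
        | ring1
        | omega
        | contradiction
        | (obtain rfl : m = 0 := (by omega); ring1)
  · split_ifs <;>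
      first
        | ring1
        | omega
        | contradiction
        | (obtain rfl : n = 0 := (by omega); ring1)
  · split_ifs <;>
      first
        | ring1
        | omega
        | contradiction
        | (obtain rfl : n = m := (by omega); ring1)
        | (obtain rfl : m = n + 1 := (by omega); ring1)
        | (obtain rfl : n = m + 1 := (by omega); ring1)
end

section
/- Let μ and ν be positive Borel measures on ℝ, all of whose polynomial moments are finite, and let r be a real polynomial of degree 1 such that ∫ f dμ = ∫ f·r dν for every real polynomial f. Let (P_n)_{n∈ℕ} and (p_n)_{n∈ℕ} be real polynomials with deg P_n = n, deg p_n = n, satisfying the orthogonality relations ∫ P_n P_m dμ = H_n δ_{n,m} and ∫ p_n p_m dν = h_n δ_{n,m}, with H_n > 0 and h_n > 0 for all n. Then for every n ≥ 1 one has the polynomial identity p_n = (lc(p_n)/lc(P_n))·P_n + lc(r)·(h_n/H_{n−1})·(lc(P_{n−1})/lc(p_n))·P_{n−1}, where lc(·) denotes the leading coefficient of a polynomial. -/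
open MeasureTheory Polynomial Finset

/-- Any polynomial of degree `< n` is a linear combination of `Q 0, …, Q (n-1)`
when `deg (Q k) = k`. -/
lemma rep_aux (Q : ℕ → Polynomial ℝ) (hQ : ∀ k, (Q k).degree = k) :
    ∀ (n : ℕ) (f : Polynomial ℝ), f.degree < (n : ℕ) →
      ∃ c : ℕ → ℝ, f = ∑ k ∈ Finset.range n, Polynomial.C (c k) * Q k := by
  intro n
  induction n with
  | zero =>
    intro f hf
    refine ⟨0, ?_⟩
    have : f = 0 := Polynomial.degree_eq_bot.mp (Nat.WithBot.lt_zero_iff.mp (by exact_mod_cast hf))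
    simp [this]
  | succ n ih =>
    intro f hf
    have hQn0 : Q n ≠ 0 := fun h => by simpa [h] using hQ n
    have hlc : (Q n).leadingCoeff ≠ 0 := Polynomial.leadingCoeff_ne_zero.mpr hQn0
    have hnd : (Q n).natDegree = n := Polynomial.natDegree_eq_of_degree_eq_some (hQ n)
    set e : ℝ := f.coeff n / (Q n).leadingCoeff with he
    have hcoQ : (Q n).coeff n = (Q n).leadingCoeff := by
      rw [Polynomial.leadingCoeff, hnd]
    have hdeg : (f - Polynomial.C e * Q n).degree < (n : ℕ) := by
      rw [Polynomial.degree_lt_iff_coeff_zero]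
      intro m hm
      rcases eq_or_lt_of_le hm with hEq | hLt
      · have hEq' : m = n := by exact_mod_cast hEq.symm
        subst hEq'
        simp [Polynomial.coeff_C_mul, hcoQ, he, div_mul_cancel₀ _ hlc]
      · have hmn : (n : WithBot ℕ) < (m : ℕ) := by exact_mod_cast hLt
        have h1 : f.coeff m = 0 := by
          apply Polynomial.coeff_eq_zero_of_degree_lt
          calc f.degree < ((n+1 : ℕ) : WithBot ℕ) := hf
            _ ≤ (m : ℕ) := by exact_mod_cast Nat.succ_le_of_lt (by exact_mod_cast hmn)
        have h2 : (Q n).coeff m = 0 := by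
          apply Polynomial.coeff_eq_zero_of_degree_lt
          rw [hQ n]; exact hmn
        simp [h1, h2]
    obtain ⟨c, hc⟩ := ih _ hdeg
    refine ⟨Function.update c n e, ?_⟩
    rw [Finset.sum_range_succ, Function.update_self]
    have : ∑ k ∈ Finset.range n, Polynomial.C (Function.update c n e k) * Q k
        = ∑ k ∈ Finset.range n, Polynomial.C (c k) * Q k := by
      apply Finset.sum_congr rfl
      intro k hk
      rw [Function.update_of_ne (Nat.ne_of_lt (Finset.mem_range.mp hk))]
    rw [this, ← hc]
    ring

/-- If `g` is orthogonal (w.r.t. `ν`) to `Q 0, …, Q (n-1)`, then it is orthogonal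
to every polynomial of degree `< n`. -/
lemma orth_ext (ν : Measure ℝ) (hmom : ∀ f : Polynomial ℝ, Integrable (fun x => f.eval x) ν)
    (Q : ℕ → Polynomial ℝ) (hQ : ∀ k, (Q k).degree = k)
    (g : Polynomial ℝ) (n : ℕ)
    (hg : ∀ k, k < n → ∫ x, g.eval x * (Q k).eval x ∂ν = 0)
    (f : Polynomial ℝ) (hf : f.degree < (n : ℕ)) :
    ∫ x, g.eval x * f.eval x ∂ν = 0 := by
  obtain ⟨c, rfl⟩ := rep_aux Q hQ n f hf
  have hpt : ∀ x : ℝ, g.eval x * (∑ k ∈ Finset.range n, Polynomial.C (c k) * Q k).eval x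
      = ∑ k ∈ Finset.range n, c k * (g.eval x * (Q k).eval x) := by
    intro x
    rw [Polynomial.eval_finset_sum, Finset.mul_sum]
    apply Finset.sum_congr rfl
    intro k _
    simp; ring
  simp_rw [hpt]
  rw [integral_finset_sum]
  · apply Finset.sum_eq_zero
    intro k hk
    rw [integral_const_mul, hg k (Finset.mem_range.mp hk), mul_zero]
  · intro k _
    have : Integrable (fun x => (g * Q k).eval x) ν := hmom _
    exact (by simpa [Polynomial.eval_mul] using this : Integrable (fun x => g.eval x * (Q k).eval x) ν).const_mul _

/-- A polynomial of degree `< n` orthogonal to `P 0, …, P (n-1)` is zero. -/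
lemma poly_eq_zero (μ : Measure ℝ) (hmom : ∀ f : Polynomial ℝ, Integrable (fun x => f.eval x) μ)
    (P : ℕ → Polynomial ℝ) (hPdeg : ∀ k, (P k).degree = k)
    (H : ℕ → ℝ) (hHne : ∀ k, H k ≠ 0)
    (hPortho : ∀ n m, ∫ x, (P n).eval x * (P m).eval x ∂μ = if n = m then H n else 0)
    (n : ℕ) (g : Polynomial ℝ) (hdeg : g.degree < (n : ℕ))
    (horth : ∀ k, k < n → ∫ x, g.eval x * (P k).eval x ∂μ = 0) : g = 0 := by
  obtain ⟨c, rfl⟩ := rep_aux P hPdeg n g hdeg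
  suffices hz : ∀ j, j < n → c j = 0 by
    apply Finset.sum_eq_zero
    intro k hk
    rw [hz k (Finset.mem_range.mp hk)]
    simp
  intro j hj
  have hOrthj := horth j hj
  have hpt : ∀ x : ℝ, (∑ k ∈ Finset.range n, Polynomial.C (c k) * P k).eval x * (P j).eval x
      = ∑ k ∈ Finset.range n, c k * ((P k).eval x * (P j).eval x) := by
    intro x
    rw [Polynomial.eval_finset_sum, Finset.sum_mul]
    apply Finset.sum_congr rfl
    intro k _
    simp; ring
  rw [show (∫ x, (∑ k ∈ Finset.range n, Polynomial.C (c k) * P k).eval x * (P j).eval x ∂μ)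
      = ∑ k ∈ Finset.range n, c k * (if k = j then H k else 0) from ?_] at hOrthj
  · rw [Finset.sum_eq_single j] at hOrthj
    · simp at hOrthj
      exact hOrthj.resolve_right (hHne j)
    · intro k _ hkj; simp [hkj]
    · intro hjn; exact absurd (Finset.mem_range.mpr hj) hjn
  · simp_rw [hpt]
    rw [integral_finset_sum]
    · apply Finset.sum_congr rfl
      intro k _
      rw [integral_const_mul, hPortho]
    · intro k _
      have : Integrable (fun x => (P k * P j).eval x) μ := hmom _
      exact (by simpa [Polynomial.eval_mul] using this : Integrable (fun x => (P k).eval x * (P j).eval x) μ).const_mul _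

/-- Two families of orthogonal polynomials whose orthogonality measures `μ`, `ν` are related by
`dμ = r dν` with `deg r = 1` are linked by a two-term connection formula. -/
theorem stmt_1 (μ ν : Measure ℝ) (r : Polynomial ℝ) (hr : r.degree = 1)
    (hμmom : ∀ f : Polynomial ℝ, Integrable (fun x => f.eval x) μ)
    (hνmom : ∀ f : Polynomial ℝ, Integrable (fun x => f.eval x) ν)
    (hrν : ∀ f : Polynomial ℝ, ∫ x, f.eval x ∂μ = ∫ x, f.eval x * r.eval x ∂ν)
    (P p : ℕ → Polynomial ℝ) (H h : ℕ → ℝ)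
    (hPdeg : ∀ n, (P n).degree = n) (hpdeg : ∀ n, (p n).degree = n)
    (hHpos : ∀ n, 0 < H n) (hhpos : ∀ n, 0 < h n)
    (hPortho : ∀ n m, ∫ x, (P n).eval x * (P m).eval x ∂μ = if n = m then H n else 0)
    (hportho : ∀ n m, ∫ x, (p n).eval x * (p m).eval x ∂ν = if n = m then h n else 0) :
    ∀ n : ℕ, 1 ≤ n →
      p n = Polynomial.C ((p n).leadingCoeff / (P n).leadingCoeff) * P n
        + Polynomial.C (r.leadingCoeff * (h n / H (n - 1))
            * ((P (n - 1)).leadingCoeff / (p n).leadingCoeff)) * P (n - 1) := by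
  intro n hn
  obtain ⟨m, rfl⟩ : ∃ m, n = m + 1 := ⟨n - 1, (Nat.succ_pred_eq_of_pos hn).symm⟩
  simp only [Nat.add_sub_cancel]
  -- basic nonvanishing facts
  have hP0 : ∀ k, P k ≠ 0 := fun k hk => by simpa [hk] using hPdeg k
  have hp0 : ∀ k, p k ≠ 0 := fun k hk => by simpa [hk] using hpdeg k
  have hr0 : r ≠ 0 := fun hk => by simpa [hk] using hr
  have hPlc : ∀ k, (P k).leadingCoeff ≠ 0 := fun k => Polynomial.leadingCoeff_ne_zero.mpr (hP0 k)
  have hplc : ∀ k, (p k).leadingCoeff ≠ 0 := fun k => Polynomial.leadingCoeff_ne_zero.mpr (hp0 k)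
  have hrlc : r.leadingCoeff ≠ 0 := Polynomial.leadingCoeff_ne_zero.mpr hr0
  set a : ℝ := (p (m+1)).leadingCoeff / (P (m+1)).leadingCoeff with ha
  set b : ℝ := r.leadingCoeff * (h (m+1) / H m) * ((P m).leadingCoeff / (p (m+1)).leadingCoeff) with hb
  set c : ℝ := (P m).leadingCoeff * r.leadingCoeff / (p (m+1)).leadingCoeff with hc
  set g : Polynomial ℝ := p (m+1) - Polynomial.C a * P (m+1) - Polynomial.C b * P m with hgdef
  -- relation between μ- and ν-integrals of products
  have hmu_nu : ∀ f q : Polynomial ℝ,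
      ∫ x, f.eval x * q.eval x ∂μ = ∫ x, f.eval x * (q * r).eval x ∂ν := by
    intro f q
    have := hrν (f * q)
    simpa [Polynomial.eval_mul, mul_assoc] using this
  -- degree of P k * r
  have hdegPr : ∀ k, (P k * r).degree = ((k + 1 : ℕ) : WithBot ℕ) := by
    intro k
    rw [Polynomial.degree_mul, hPdeg k, hr]
    exact_mod_cast rfl
  -- orthogonality of p (m+1) to p k for k < m+1
  have hporthlt : ∀ k, k < m + 1 → ∫ x, (p (m+1)).eval x * (p k).eval x ∂ν = 0 := by
    intro k hk
    rw [hportho]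
    simp [Nat.ne_of_gt hk]
  -- p (m+1) is ν-orthogonal to all polynomials of degree < m+1
  have hkey : ∀ f : Polynomial ℝ, f.degree < ((m + 1 : ℕ) : WithBot ℕ) →
      ∫ x, (p (m+1)).eval x * f.eval x ∂ν = 0 :=
    fun f hf => orth_ext ν hνmom p hpdeg (p (m+1)) (m+1) hporthlt f hf
  -- ∫ p_{m+1} P_k dμ = 0 for k < m
  have hPk0 : ∀ k, k < m → ∫ x, (p (m+1)).eval x * (P k).eval x ∂μ = 0 := by
    intro k hk
    rw [hmu_nu]
    apply hkey
    rw [hdegPr k]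
    exact_mod_cast Nat.succ_lt_succ hk
  -- ∫ p_{m+1} P_m dμ = c * h (m+1)
  have hPm : ∫ x, (p (m+1)).eval x * (P m).eval x ∂μ = c * h (m+1) := by
    rw [hmu_nu]
    set s : Polynomial ℝ := P m * r - Polynomial.C c * p (m+1) with hs
    have hc0 : c ≠ 0 := by
      rw [hc]
      exact div_ne_zero (mul_ne_zero (hPlc m) hrlc) (hplc (m+1))
    have hdegs : s.degree < ((m + 1 : ℕ) : WithBot ℕ) := by
      rw [hs, ← hdegPr m]
      apply Polynomial.degree_sub_lt
      · rw [hdegPr m, Polynomial.degree_C_mul hc0, hpdeg]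
      · exact mul_ne_zero (hP0 m) hr0
      · rw [Polynomial.leadingCoeff_mul, Polynomial.leadingCoeff_mul,
          Polynomial.leadingCoeff_C, hc, div_mul_cancel₀ _ (hplc (m+1))]
    have hpt : ∀ x : ℝ, (p (m+1)).eval x * (P m * r).eval x
        = c * ((p (m+1)).eval x * (p (m+1)).eval x) + (p (m+1)).eval x * s.eval x := by
      intro x
      simp only [hs, Polynomial.eval_sub, Polynomial.eval_mul, Polynomial.eval_C]
      ring
    simp_rw [hpt]
    rw [integral_add]
    · rw [integral_const_mul, hportho, hkey s hdegs, add_zero]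
      simp
    · exact ((by simpa [Polynomial.eval_mul] using hνmom (p (m+1) * p (m+1)) :
        Integrable (fun x => (p (m+1)).eval x * (p (m+1)).eval x) ν)).const_mul _
    · simpa [Polynomial.eval_mul] using hνmom (p (m+1) * s)
  -- g is μ-orthogonal to P k for k < m+1
  have hgorth : ∀ k, k < m + 1 → ∫ x, g.eval x * (P k).eval x ∂μ = 0 := by
    intro k hk
    have hpt : ∀ x : ℝ, g.eval x * (P k).eval x
        = (p (m+1)).eval x * (P k).eval x - a * ((P (m+1)).eval x * (P k).eval x)
          - b * ((P m).eval x * (P k).eval x) := by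
      intro x
      simp only [hgdef, Polynomial.eval_sub, Polynomial.eval_mul, Polynomial.eval_C]
      ring
    simp_rw [hpt]
    have i1 : Integrable (fun x => (p (m+1)).eval x * (P k).eval x) μ := by
      simpa [Polynomial.eval_mul] using hμmom (p (m+1) * P k)
    have i2 : Integrable (fun x => (P (m+1)).eval x * (P k).eval x) μ := by
      simpa [Polynomial.eval_mul] using hμmom (P (m+1) * P k)
    have i3 : Integrable (fun x => (P m).eval x * (P k).eval x) μ := by
      simpa [Polynomial.eval_mul] using hμmom (P m * P k)
    have i12 : Integrable (fun x => (p (m+1)).eval x * (P k).eval x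
        - a * ((P (m+1)).eval x * (P k).eval x)) μ := i1.sub (i2.const_mul a)
    rw [integral_sub i12 (i3.const_mul b),
      integral_sub i1 (i2.const_mul a), integral_const_mul, integral_const_mul,
      hPortho, hPortho]
    have hne : m + 1 ≠ k := Nat.ne_of_gt hk
    rcases Nat.lt_or_ge k m with hkm | hkm
    · rw [hPk0 k hkm]
      simp [hne, Nat.ne_of_gt hkm]
    · have hkm' : k = m := le_antisymm (Nat.lt_succ_iff.mp hk) hkm
      subst hkm'
      rw [hPm]
      simp only [hne, if_false, eq_self_iff_true, if_true, mul_zero, sub_zero]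
      have hbH : b * H k = c * h (k+1) := by
        rw [hb, hc]
        field_simp [(hHpos k).ne', hplc (k+1)]
      linarith
  -- degree of g is < m+1
  have hgdeg : g.degree < ((m + 1 : ℕ) : WithBot ℕ) := by
    have ht : (p (m+1) - Polynomial.C a * P (m+1)).degree < ((m + 1 : ℕ) : WithBot ℕ) := by
      rw [← hpdeg (m+1)]
      apply Polynomial.degree_sub_lt
      · rw [Polynomial.degree_C_mul (by rw [ha]; exact div_ne_zero (hplc (m+1)) (hPlc (m+1))),
          hpdeg, hPdeg]
      · exact hp0 (m+1)
      · rw [Polynomial.leadingCoeff_mul, Polynomial.leadingCoeff_C, ha,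
          div_mul_cancel₀ _ (hPlc (m+1))]
    have hu : (Polynomial.C b * P m).degree < ((m + 1 : ℕ) : WithBot ℕ) := by
      apply lt_of_le_of_lt (Polynomial.degree_mul_le _ _)
      apply lt_of_le_of_lt (add_le_add Polynomial.degree_C_le (le_of_eq (hPdeg m)))
      rw [zero_add]
      exact_mod_cast Nat.lt_succ_self m
    calc g.degree ≤ max (p (m+1) - Polynomial.C a * P (m+1)).degree (Polynomial.C b * P m).degree :=
          Polynomial.degree_sub_le _ _
      _ < ((m + 1 : ℕ) : WithBot ℕ) := max_lt ht hu
  -- conclude g = 0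
  have hg0 : g = 0 :=
    poly_eq_zero μ hμmom P hPdeg H (fun k => (hHpos k).ne') hPortho (m+1) g hgdeg hgorth
  have : p (m+1) - (Polynomial.C a * P (m+1) + Polynomial.C b * P m) = 0 := by
    rw [← sub_sub]; exact hg0
  exact sub_eq_zero.mp this
end

section
/- Let μ and ν be positive Borel measures on ℝ with all polynomial moments finite, let r be a real polynomial of degree 1 with ∫ f dμ = ∫ f·r dν for every real polynomial f, and let (P_n), (p_n) be real polynomials with deg P_n = deg p_n = n, ∫ P_n P_m dμ = H_n δ_{n,m}, ∫ p_n p_m dν = h_n δ_{n,m}, H_n, h_n > 0. Let L be a linear map on the space of real polynomials with L P_n = Λ_n P_n for a sequence Λ : ℕ → ℝ, and set Λ_{−1} := 0. Then for all n, m ∈ ℕ: (1/√(h_n h_m)) ∫ r·(L p_n)·p_m dν = a_n δ_{m,n+1} + b_n δ_{m,n} + a_{n−1} δ_{m,n−1}, where a_n = Λ_n·lc(r)·(lc(p_n)/lc(p_{n+1}))·√(h_{n+1}/h_n), b_n = Λ_n·(H_n/h_n)·(lc(p_n)/lc(P_n))² + Λ_{n−1}·lc(r)²·(h_n/H_{n−1})·(lc(P_{n−1})/lc(p_n))²,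 and a_{−1} := 0. -/
/-!
Write `⟨f⟩_μ = ∫ f dμ`. The hypothesis on `r` turns `∫ r (L p_n) p_m dν` into `⟨(L p_n) p_m⟩_μ`,
and expanding `p_n` in the `μ`-orthogonal basis `P_k`, on which `L` is diagonal, gives
`⟨(L p_n) p_m⟩_μ = ∑ₖ Λ_k ⟨P_k p_n⟩_μ ⟨P_k p_m⟩_μ / H_k`.
The mixed moment `⟨P_k p_j⟩_μ` vanishes unless `j ∈ {k, k + 1}`: for `j < k` by orthogonality
of `P`, and for `j > k + 1` because it equals `⟨(P_k r) p_j⟩_ν` with `deg (P_k r) = k + 1`.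
The two surviving moments are read off from leading coefficients, hence the tridiagonal form.
-/

open MeasureTheory Polynomial Finset

namespace Polynomial

variable {𝕜 : Type*} [Field 𝕜]

theorem coeff_eq_leadingCoeff_of_degree_eq {q : 𝕜[X]} {n : ℕ} (hq : q.degree = n) :
    q.coeff n = q.leadingCoeff := by
  rw [leadingCoeff, natDegree_eq_of_degree_eq_some hq]

theorem degree_sub_smul_lt {s q : 𝕜[X]} {j : ℕ} (hs : s.degree ≤ j) (hq : q.degree = j) :
    (s - (s.coeff j / q.leadingCoeff) • q).degree < j := by
  have hq0 : q ≠ 0 := by rintro rfl; simp at hq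
  rw [degree_lt_iff_coeff_zero]
  intro m hm
  rw [coeff_sub, coeff_smul, smul_eq_mul]
  rcases hm.eq_or_lt with rfl | hm
  · rw [coeff_eq_leadingCoeff_of_degree_eq hq, div_mul_cancel₀ _ (leadingCoeff_ne_zero.mpr hq0),
      sub_self]
  · rw [coeff_eq_zero_of_degree_lt (hs.trans_lt (by exact_mod_cast hm)),
      coeff_eq_zero_of_degree_lt (hq.trans_lt (by exact_mod_cast hm)), mul_zero, sub_zero]

theorem degree_mul_eq_succ {q r : 𝕜[X]} {k : ℕ} (hq : q.degree = k) (hr : r.degree = 1) :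
    (q * r).degree = (k + 1 : ℕ) := by
  rw [degree_mul, hq, hr]
  norm_cast

theorem mem_span_image_Iio_of_degree_lt {Q : ℕ → 𝕜[X]} (hQ : ∀ n, (Q n).degree = n)
    {f : 𝕜[X]} {N : ℕ} (hf : f.degree < N) : f ∈ Submodule.span 𝕜 (Q '' Set.Iio N) := by
  let S : Sequence 𝕜 := ⟨Q, hQ⟩
  rw [S.span_degreeLT fun i _ => (leadingCoeff_ne_zero.mpr (S.ne_zero i)).isUnit]
  exact mem_degreeLT.mpr hf

structure IsOrthogonalSequence (φ : 𝕜[X] →ₗ[𝕜] 𝕜) (Q : ℕ → 𝕜[X]) (K : ℕ → 𝕜) : Prop where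
  degree_eq : ∀ n, (Q n).degree = n
  apply_mul : ∀ n m, φ (Q n * Q m) = if n = m then K n else 0

namespace IsOrthogonalSequence

variable {φ : 𝕜[X] →ₗ[𝕜] 𝕜} {Q : ℕ → 𝕜[X]} {K : ℕ → 𝕜}

theorem leadingCoeff_ne_zero (hQ : IsOrthogonalSequence φ Q K) (n : ℕ) :
    (Q n).leadingCoeff ≠ 0 :=
  Polynomial.leadingCoeff_ne_zero.mpr fun h0 => by simpa [h0] using hQ.degree_eq n

theorem degree_lt (hQ : IsOrthogonalSequence φ Q K) {n N : ℕ} (hn : n < N) :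
    (Q n).degree < N :=
  (hQ.degree_eq n).trans_lt (by exact_mod_cast hn)

theorem apply_mul_eq_zero_of_degree_lt (hQ : IsOrthogonalSequence φ Q K) {s : 𝕜[X]} {j : ℕ}
    (hs : s.degree < j) : φ (Q j * s) = 0 := by
  have hker : Submodule.span 𝕜 (Q '' Set.Iio j) ≤
      LinearMap.ker (φ ∘ₗ LinearMap.mulLeft 𝕜 (Q j)) := by
    rw [Submodule.span_le]
    rintro _ ⟨i, hi, rfl⟩
    exact (hQ.apply_mul j i).trans (if_neg (ne_of_gt hi))
  exact hker (mem_span_image_Iio_of_degree_lt hQ.degree_eq hs)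

theorem apply_mul_eq_coeff (hQ : IsOrthogonalSequence φ Q K) {s : 𝕜[X]} {j : ℕ}
    (hs : s.degree ≤ j) : φ (Q j * s) = s.coeff j / (Q j).leadingCoeff * K j := by
  have h := hQ.apply_mul_eq_zero_of_degree_lt (degree_sub_smul_lt hs (hQ.degree_eq j))
  rwa [mul_sub, map_sub, mul_smul_comm, map_smul, hQ.apply_mul, if_pos rfl, smul_eq_mul,
    sub_eq_zero] at h

theorem apply_mul_of_degree_eq (hQ : IsOrthogonalSequence φ Q K) {s : 𝕜[X]} {j : ℕ}
    (hs : s.degree = j) : φ (Q j * s) = s.leadingCoeff / (Q j).leadingCoeff * K j := by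
  rw [hQ.apply_mul_eq_coeff hs.le, coeff_eq_leadingCoeff_of_degree_eq hs]

theorem sum_smul_eq_of_degree_lt (hQ : IsOrthogonalSequence φ Q K) (hK : ∀ n, K n ≠ 0)
    {f : 𝕜[X]} {N : ℕ} (hf : f.degree < N) :
    ∑ k ∈ range N, (φ (Q k * f) / K k) • Q k = f := by
  let E : 𝕜[X] →ₗ[𝕜] 𝕜[X] := ∑ k ∈ range N,
    LinearMap.smulRight (φ ∘ₗ LinearMap.mulLeft 𝕜 (Q k)) ((K k)⁻¹ • Q k : 𝕜[X])
  have hE : Set.EqOn E (LinearMap.id (R := 𝕜)) (Q '' Set.Iio N) := by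
    rintro _ ⟨j, hj, rfl⟩
    rw [Set.mem_Iio] at hj
    simp [E, hQ.apply_mul, smul_smul, hK j, hj]
  simpa [E, div_eq_mul_inv, smul_smul] using
    LinearMap.eqOn_span' hE (mem_span_image_Iio_of_degree_lt hQ.degree_eq hf)

theorem apply_map_mul_eq_sum (hQ : IsOrthogonalSequence φ Q K) (hK : ∀ n, K n ≠ 0)
    {L : 𝕜[X] →ₗ[𝕜] 𝕜[X]} {Λ : ℕ → 𝕜} (hL : ∀ n, L (Q n) = Λ n • Q n)
    {f : 𝕜[X]} {N : ℕ} (hf : f.degree < N) (g : 𝕜[X]) :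
    φ (L f * g) = ∑ k ∈ range N, φ (Q k * f) / K k * Λ k * φ (Q k * g) := by
  conv_lhs => rw [← hQ.sum_smul_eq_of_degree_lt hK hf]
  simp [hL, smul_smul, Finset.sum_mul, mul_assoc]

end IsOrthogonalSequence

section ChristoffelPair

variable {φμ φν : 𝕜[X] →ₗ[𝕜] 𝕜} {r : 𝕜[X]} {P p : ℕ → 𝕜[X]} {H h : ℕ → 𝕜}

theorem mixedMoment_succ (hr : r.degree = 1) (hrφ : ∀ f, φμ f = φν (f * r))
    (hPdeg : ∀ n, (P n).degree = n) (hp : IsOrthogonalSequence φν p h) (k : ℕ) :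
    φμ (P k * p (k + 1)) =
      (P k).leadingCoeff * r.leadingCoeff / (p (k + 1)).leadingCoeff * h (k + 1) := by
  rw [hrφ, mul_right_comm, mul_comm, hp.apply_mul_of_degree_eq (degree_mul_eq_succ (hPdeg k) hr),
    leadingCoeff_mul]

theorem mixedMoment_eq_zero (hr : r.degree = 1) (hrφ : ∀ f, φμ f = φν (f * r))
    (hP : IsOrthogonalSequence φμ P H) (hp : IsOrthogonalSequence φν p h) {k j : ℕ}
    (hjk : j ≠ k) (hjk' : j ≠ k + 1) : φμ (P k * p j) = 0 := by
  rcases lt_or_gt_of_ne hjk with hlt | hgt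
  · exact hP.apply_mul_eq_zero_of_degree_lt (hp.degree_lt hlt)
  · rw [hrφ, mul_right_comm, mul_comm]
    exact hp.apply_mul_eq_zero_of_degree_lt
      (by rw [degree_mul_eq_succ (hP.degree_eq k) hr]; exact_mod_cast (by omega : k + 1 < j))

variable {L : 𝕜[X] →ₗ[𝕜] 𝕜[X]} {Λ : ℕ → 𝕜}

theorem apply_map_mul_succ (hr : r.degree = 1) (hrφ : ∀ f, φμ f = φν (f * r))
    (hP : IsOrthogonalSequence φμ P H) (hp : IsOrthogonalSequence φν p h) (hH : ∀ n, H n ≠ 0)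
    (hL : ∀ n, L (P n) = Λ n • P n) (n : ℕ) :
    φμ (L (p n) * p (n + 1)) =
      Λ n * r.leadingCoeff * ((p n).leadingCoeff / (p (n + 1)).leadingCoeff) * h (n + 1) := by
  rw [hP.apply_map_mul_eq_sum hH hL (hp.degree_lt n.lt_succ_self),
    sum_eq_single_of_mem n (self_mem_range_succ n),
    hP.apply_mul_of_degree_eq (hp.degree_eq n), mixedMoment_succ hr hrφ hP.degree_eq hp]
  · field_simp [hP.leadingCoeff_ne_zero n, hH n]
  · intro k hk hkn
    rw [mem_range] at hk
    rw [mixedMoment_eq_zero hr hrφ hP hp (j := n + 1) (by omega) (by omega), mul_zero]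

theorem apply_map_succ_mul (hr : r.degree = 1) (hrφ : ∀ f, φμ f = φν (f * r))
    (hP : IsOrthogonalSequence φμ P H) (hp : IsOrthogonalSequence φν p h) (hH : ∀ n, H n ≠ 0)
    (hL : ∀ n, L (P n) = Λ n • P n) (n : ℕ) :
    φμ (L (p (n + 1)) * p n) =
      Λ n * r.leadingCoeff * ((p n).leadingCoeff / (p (n + 1)).leadingCoeff) * h (n + 1) := by
  rw [hP.apply_map_mul_eq_sum hH hL (hp.degree_lt (n + 1).lt_succ_self),
    sum_eq_single_of_mem n (by simp),
    hP.apply_mul_of_degree_eq (hp.degree_eq n), mixedMoment_succ hr hrφ hP.degree_eq hp]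
  · field_simp [hP.leadingCoeff_ne_zero n, hH n]
  · intro k hk hkn
    rw [mem_range] at hk
    rcases (by omega : k < n ∨ k = n + 1) with hlt | rfl
    · rw [mixedMoment_eq_zero hr hrφ hP hp (j := n + 1) (by omega) (by omega), zero_div,
        zero_mul, zero_mul]
    · rw [mixedMoment_eq_zero hr hrφ hP hp (j := n) (by omega) (by omega), mul_zero]

theorem apply_map_mul_self (hr : r.degree = 1) (hrφ : ∀ f, φμ f = φν (f * r))
    (hP : IsOrthogonalSequence φμ P H) (hp : IsOrthogonalSequence φν p h) (hH : ∀ n, H n ≠ 0)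
    (hh : ∀ n, h n ≠ 0) (hL : ∀ n, L (P n) = Λ n • P n) (n : ℕ) :
    φμ (L (p n) * p n) =
      (Λ n * (H n / h n) * ((p n).leadingCoeff / (P n).leadingCoeff) ^ 2
        + (if n = 0 then 0 else Λ (n - 1)) * r.leadingCoeff ^ 2 * (h n / H (n - 1))
          * ((P (n - 1)).leadingCoeff / (p n).leadingCoeff) ^ 2) * h n := by
  rw [hP.apply_map_mul_eq_sum hH hL (hp.degree_lt n.lt_succ_self)]
  rcases n with _ | n
  · rw [sum_range_one, hP.apply_mul_of_degree_eq (hp.degree_eq 0), if_pos rfl]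
    field_simp [hH 0, hh 0, hP.leadingCoeff_ne_zero, hp.leadingCoeff_ne_zero]
    ring
  · rw [sum_range_succ, sum_range_succ, sum_eq_zero, hP.apply_mul_of_degree_eq (hp.degree_eq _),
      mixedMoment_succ hr hrφ hP.degree_eq hp, if_neg n.succ_ne_zero, Nat.add_sub_cancel]
    · field_simp [hH n, hH (n + 1), hh (n + 1), hP.leadingCoeff_ne_zero, hp.leadingCoeff_ne_zero]
      ring
    · intro k hk
      rw [mem_range] at hk
      rw [mixedMoment_eq_zero hr hrφ hP hp (j := n + 1) (by omega) (by omega), zero_div,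
        zero_mul, zero_mul]

theorem apply_map_mul_eq_zero (hr : r.degree = 1) (hrφ : ∀ f, φμ f = φν (f * r))
    (hP : IsOrthogonalSequence φμ P H) (hp : IsOrthogonalSequence φν p h) (hH : ∀ n, H n ≠ 0)
    (hL : ∀ n, L (P n) = Λ n • P n) {n m : ℕ} (h₁ : m ≠ n + 1) (h₂ : m ≠ n) (h₃ : n ≠ m + 1) :
    φμ (L (p n) * p m) = 0 := by
  rw [hP.apply_map_mul_eq_sum hH hL (hp.degree_lt n.lt_succ_self)]
  refine sum_eq_zero fun k _ => ?_
  by_cases hkn : n = k ∨ n = k + 1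
  · rw [mixedMoment_eq_zero hr hrφ hP hp (j := m) (by omega) (by omega), mul_zero]
  · rw [mixedMoment_eq_zero hr hrφ hP hp (j := n) (by omega) (by omega), zero_div, zero_mul,
      zero_mul]

end ChristoffelPair

end Polynomial

noncomputable def momentFunctional (μ : Measure ℝ)
    (hμ : ∀ f : ℝ[X], Integrable (fun x => f.eval x) μ) : ℝ[X] →ₗ[ℝ] ℝ where
  toFun f := ∫ x, f.eval x ∂μ
  map_add' f g := by simp only [eval_add]; exact integral_add (hμ f) (hμ g)
  map_smul' c f := by
    simp only [eval_smul, smul_eq_mul, RingHom.id_apply]; exact integral_const_mul c _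

@[simp]
theorem momentFunctional_apply (μ : Measure ℝ)
    (hμ : ∀ f : ℝ[X], Integrable (fun x => f.eval x) μ) (f : ℝ[X]) :
    momentFunctional μ hμ f = ∫ x, f.eval x ∂μ :=
  rfl

theorem div_sqrt_mul_eq_sqrt_div {x y : ℝ} (hx : 0 < x) (hy : 0 < y) :
    y / √(x * y) = √(y / x) := by
  rw [Real.sqrt_div hy.le, Real.sqrt_mul hx.le, div_eq_div_iff (by positivity) (by positivity),
    mul_left_comm, Real.mul_self_sqrt hy.le, mul_comm]

/-- General tridiagonalisation of the operator `T = r·L` in the orthonormal basis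
`p_n/√(h_n)` of `L²(ν)`: the operator acts as a Jacobi (tridiagonal) matrix with
explicit entries in terms of leading coefficients, norms, and the eigenvalues `Λ_n`. -/
theorem stmt_2 (μ ν : Measure ℝ) (r : Polynomial ℝ) (hr : r.degree = 1)
    (hμmom : ∀ f : Polynomial ℝ, Integrable (fun x => f.eval x) μ)
    (hνmom : ∀ f : Polynomial ℝ, Integrable (fun x => f.eval x) ν)
    (hrν : ∀ f : Polynomial ℝ, ∫ x, f.eval x ∂μ = ∫ x, f.eval x * r.eval x ∂ν)
    (P p : ℕ → Polynomial ℝ) (H h : ℕ → ℝ)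
    (hPdeg : ∀ n, (P n).degree = n) (hpdeg : ∀ n, (p n).degree = n)
    (hHpos : ∀ n, 0 < H n) (hhpos : ∀ n, 0 < h n)
    (hPortho : ∀ n m, ∫ x, (P n).eval x * (P m).eval x ∂μ = if n = m then H n else 0)
    (hportho : ∀ n m, ∫ x, (p n).eval x * (p m).eval x ∂ν = if n = m then h n else 0)
    (L : Polynomial ℝ →ₗ[ℝ] Polynomial ℝ) (Λ : ℕ → ℝ)
    (hL : ∀ n, L (P n) = Λ n • P n)
    (a b : ℕ → ℝ)
    (ha : ∀ n, a n = Λ n * r.leadingCoeff * ((p n).leadingCoeff / (p (n + 1)).leadingCoeff)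
        * Real.sqrt (h (n + 1) / h n))
    (hb : ∀ n, b n = Λ n * (H n / h n) * ((p n).leadingCoeff / (P n).leadingCoeff) ^ 2
        + (if n = 0 then 0 else Λ (n - 1)) * r.leadingCoeff ^ 2 * (h n / H (n - 1))
            * ((P (n - 1)).leadingCoeff / (p n).leadingCoeff) ^ 2) :
    ∀ n m : ℕ,
      (1 / Real.sqrt (h n * h m)) * ∫ x, r.eval x * (L (p n)).eval x * (p m).eval x ∂ν
        = a n * (if m = n + 1 then 1 else 0) + b n * (if m = n then 1 else 0)
          + (if n = 0 then 0 else a (n - 1) * (if m = n - 1 then 1 else 0)) := by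
  set φμ := momentFunctional μ hμmom
  set φν := momentFunctional ν hνmom
  have hrφ : ∀ f, φμ f = φν (f * r) := by simpa [φμ, φν] using hrν
  have hP : IsOrthogonalSequence φμ P H := ⟨hPdeg, by simpa [φμ]⟩
  have hp : IsOrthogonalSequence φν p h := ⟨hpdeg, by simpa [φν]⟩
  have hH : ∀ n, H n ≠ 0 := fun n => (hHpos n).ne'
  have hh : ∀ n, h n ≠ 0 := fun n => (hhpos n).ne'
  intro n m
  have hT : ∫ x, r.eval x * (L (p n)).eval x * (p m).eval x ∂ν = φμ (L (p n) * p m) := by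
    simp only [hrφ, φν, momentFunctional_apply, eval_mul]
    congr 1 with x
    ring
  rw [hT]
  obtain rfl | rfl | rfl | ⟨h₁, h₂, h₃⟩ :
      m = n + 1 ∨ m = n ∨ n = m + 1 ∨ (m ≠ n + 1 ∧ m ≠ n ∧ n ≠ m + 1) := by omega
  · rw [apply_map_mul_succ hr hrφ hP hp hH hL, one_div_mul_eq_div, mul_div_assoc,
      div_sqrt_mul_eq_sqrt_div (hhpos n) (hhpos _), ← ha]
    simp [show n + 1 ≠ n - 1 by omega]
  · rw [apply_map_mul_self hr hrφ hP hp hH hh hL, ← hb, Real.sqrt_mul_self (hhpos m).le,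
      one_div_mul_eq_div, mul_div_cancel_right₀ _ (hh m)]
    simp +contextual [show m ≠ 0 → m ≠ m - 1 by omega]
  · rw [apply_map_succ_mul hr hrφ hP hp hH hL, one_div_mul_eq_div, mul_div_assoc,
      mul_comm (h (m + 1)), div_sqrt_mul_eq_sqrt_div (hhpos m) (hhpos _), ← ha]
    simp [show m ≠ m + 1 + 1 by omega]
  · rw [apply_map_mul_eq_zero hr hrφ hP hp hH hL h₁ h₂ h₃]
    simp +contextual [h₁, h₂, show n ≠ 0 → m ≠ n - 1 by omega]
end

section
/- Fix 0 < q < 1, 0 < a < q^{−1}, b < q^{−1}, c ∈ ℝ ∖ {0}, γ = (1+abq²) − (acq + bq/c), and let w_k = ((bq;q)_k/(q;q)_k)(aq)^k. Let x ∈ ℝ and set λ = aq + 1 − 2√(aq)·x. Define y : ℕ → ℝ by y(k) = Q_k(x; c√(aq), (b/c)√(q/a) | q)/√((q;q)_k (bq;q)_k w_k). Then for every k ∈ ℕ: aq(bq^{k+1}−1)(y(k+1)−y(k)) + (q^k−1)(y(k−1)−y(k)) + γ q^k y(k) = λ y(k), where for k = 0 the term (q^k−1)(y(k−1)−y(k))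 is interpreted as 0. -/
/-- q-shifted factorial `(a;q)_k = ∏_{j=0}^{k-1} (1 - a q^j)`. -/
noncomputable def qPoch (q a : ℝ) (k : ℕ) : ℝ := ∏ j ∈ Finset.range k, (1 - a * q ^ j)

/-- Al-Salam–Chihara polynomials, defined by `Q_0 = 1`, `Q_1 = 2x − (c+d)` and the
recurrence `2x Q_k = Q_{k+1} + (c+d)q^k Q_k + (1−q^k)(1−cdq^{k−1}) Q_{k−1}`. -/
noncomputable def alSalamChihara (q c d x : ℝ) : ℕ → ℝ
  | 0 => 1
  | 1 => 2 * x - (c + d)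
  | (k + 2) => (2 * x - (c + d) * q ^ (k + 1)) * alSalamChihara q c d x (k + 1)
      - (1 - q ^ (k + 1)) * (1 - c * d * q ^ k) * alSalamChihara q c d x k

/-!
Put `s = √(aq)`, `c' = cs` and `d' = (b/c)√(q/a) = bq/(cs)`, so that `c'd' = bq`. The
normalisation is `√((q;q)_k (bq;q)_k w_k) = (bq;q)_k s^k`, i.e. `Q_k = (bq;q)_k s^k y(k)`, and as
`(bq;q)_{k+1} = (bq;q)_k (1 - bq^{k+1})` the three-term recurrence of the `Q_k` turns into
`s²(1 - bq^{k+1}) y(k+1) = s(2x - (c'+d')q^k) y(k) - (1 - q^k) y(k-1)`.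
Because `γ = 1 + abq² - s(c'+d')` and `λ = s² + 1 - 2sx`, the claimed identity is a linear
rearrangement of this relation.
-/

lemma qPoch_zero (q a : ℝ) : qPoch q a 0 = 1 :=
  Finset.prod_range_zero _

lemma qPoch_succ (q a : ℝ) (k : ℕ) : qPoch q a (k + 1) = qPoch q a k * (1 - a * q ^ k) :=
  Finset.prod_range_succ _ _

lemma qPoch_pos {q a : ℝ} (hq0 : 0 ≤ q) (hq1 : q ≤ 1) (ha : a < 1) (k : ℕ) :
    0 < qPoch q a k := by
  refine Finset.prod_pos fun j _ => ?_
  have hqj : q ^ j ≤ 1 := pow_le_one₀ hq0 hq1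
  rcases le_or_gt a 0 with ha0 | ha0
  · nlinarith [pow_nonneg hq0 j]
  · nlinarith

/-- At `k = 0` the coefficient `1 - q ^ 0` vanishes, so the truncated `k - 1` is harmless. -/
lemma alSalamChihara_succ (q c d x : ℝ) (k : ℕ) :
    alSalamChihara q c d x (k + 1) = (2 * x - (c + d) * q ^ k) * alSalamChihara q c d x k
      - (1 - q ^ k) * (1 - c * d * q ^ (k - 1)) * alSalamChihara q c d x (k - 1) := by
  cases k with
  | zero => simp [alSalamChihara]
  | succ k => rfl

section

variable {q b c d s x : ℝ} {y : ℕ → ℝ}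

lemma normalized_alSalamChihara_recurrence (hs : s ≠ 0) (hcd : c * d = b * q)
    (hP : ∀ k, qPoch q (b * q) k ≠ 0)
    (hy : ∀ k, y k = alSalamChihara q c d x k / (qPoch q (b * q) k * s ^ k)) (k : ℕ) :
    s ^ 2 * (1 - b * q * q ^ k) * y (k + 1)
      = s * (2 * x - (c + d) * q ^ k) * y k - (1 - q ^ k) * y (k - 1) := by
  have hQ : ∀ k, alSalamChihara q c d x k = qPoch q (b * q) k * s ^ k * y k := fun k => by
    rw [hy, mul_div_cancel₀ _ (mul_ne_zero (hP k) (pow_ne_zero k hs))]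
  have hrec := alSalamChihara_succ q c d x k
  cases k with
  | zero =>
    rw [hQ, hQ, qPoch_succ, qPoch_zero] at hrec
    linear_combination s * hrec
  | succ n =>
    rw [hQ, hQ, hQ, qPoch_succ, qPoch_succ, Nat.add_sub_cancel, hcd] at hrec
    have he : 1 - b * q * q ^ n ≠ 0 := fun h => hP (n + 1) (by rw [qPoch_succ, h, mul_zero])
    have hN : qPoch q (b * q) n * s ^ n * (1 - b * q * q ^ n) ≠ 0 :=
      mul_ne_zero (mul_ne_zero (hP n) (pow_ne_zero n hs)) he
    rw [Nat.add_sub_cancel, ← mul_right_inj' hN]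
    linear_combination hrec

lemma normalized_alSalamChihara_eigen {a γ lam : ℝ} (hs : s ≠ 0) (hsa : s ^ 2 = a * q)
    (hcd : c * d = b * q) (hP : ∀ k, qPoch q (b * q) k ≠ 0)
    (hγ : γ = 1 + a * b * q ^ 2 - s * (c + d)) (hlam : lam = s ^ 2 + 1 - 2 * s * x)
    (hy : ∀ k, y k = alSalamChihara q c d x k / (qPoch q (b * q) k * s ^ k)) (k : ℕ) :
    a * q * (b * q ^ (k + 1) - 1) * (y (k + 1) - y k)
      + (q ^ k - 1) * (y (k - 1) - y k) + γ * q ^ k * y k = lam * y k := by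
  subst hγ hlam
  linear_combination (-1) * normalized_alSalamChihara_recurrence hs hcd hP hy k
    - ((b * q ^ (k + 1) - 1) * (y (k + 1) - y k) + b * q ^ (k + 1) * y k) * hsa

end

lemma sqrt_mul_mul_div_mul_pow {u v r : ℝ} (hu : u ≠ 0) (hv : 0 ≤ v) (hr : 0 ≤ r) (k : ℕ) :
    √(u * v * (v / u * r ^ k)) = v * √r ^ k := by
  rw [← Real.sqrt_sq (mul_nonneg hv (pow_nonneg (Real.sqrt_nonneg r) k)), mul_pow, ← pow_mul,
    mul_comm k 2, pow_mul, Real.sq_sqrt hr]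
  congr 1
  field_simp

theorem stmt_9_general (q a b c : ℝ) (hq : 0 < q) (hq1 : q < 1)
    (ha0 : 0 < a) (hb : b < q⁻¹) (hc : c ≠ 0)
    (γ : ℝ) (hγ : γ = (1 + a * b * q ^ 2) - (a * c * q + b * q / c))
    (w : ℕ → ℝ) (hw : ∀ k, w k = qPoch q (b * q) k / qPoch q q k * (a * q) ^ k)
    (x lam : ℝ) (hlam : lam = a * q + 1 - 2 * Real.sqrt (a * q) * x)
    (y : ℕ → ℝ)
    (hy : ∀ k, y k =
      alSalamChihara q (c * Real.sqrt (a * q)) (b / c * Real.sqrt (q / a)) x k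
        / Real.sqrt (qPoch q q k * qPoch q (b * q) k * w k)) :
    ∀ k : ℕ,
      a * q * (b * q ^ (k + 1) - 1) * (y (k + 1) - y k)
        + (if k = 0 then 0 else (q ^ k - 1) * (y (k - 1) - y k))
        + γ * q ^ k * y k
      = lam * y k := by
  have haq : 0 < a * q := mul_pos ha0 hq
  set s := √(a * q)
  have hs : 0 < s := Real.sqrt_pos.2 haq
  have hsa : s ^ 2 = a * q := Real.sq_sqrt haq.le
  have hst : s * √(q / a) = q := by
    rw [← Real.sqrt_mul haq.le, show a * q * (q / a) = q ^ 2 by field_simp, Real.sqrt_sq hq.le]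
  have hPb : ∀ k, 0 < qPoch q (b * q) k :=
    qPoch_pos hq.le hq1.le ((lt_mul_inv_iff₀ hq).1 (by rwa [one_mul]))
  have hy' : ∀ k, y k = alSalamChihara q (c * s) (b / c * √(q / a)) x k
      / (qPoch q (b * q) k * s ^ k) := fun k => by
    rw [hy, hw, sqrt_mul_mul_div_mul_pow (qPoch_pos hq.le hq1.le hq1 k).ne' (hPb k).le haq.le]
  intro k
  have key := normalized_alSalamChihara_eigen (γ := γ) (lam := lam) hs.ne' hsa
    (by field_simp; linear_combination b * hst) (fun k => (hPb k).ne')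
    (by linear_combination hγ + c * hsa + b / c * hst) (by linear_combination hlam - hsa) hy' k
  split_ifs with hk
  · subst hk
    simpa using key
  · exact key

/-- The sequence `y(k) = Q_k(x; c√(aq), (b/c)√(q/a) | q)/√((q;q)_k (bq;q)_k w_k)` is an
explicit eigenfunction of the operator `T^γ = x(L^{(aq,b)} + γ)` with eigenvalue
`λ = aq + 1 − 2√(aq) x`. -/
theorem stmt_9 (q a b c : ℝ) (hq : 0 < q) (hq1 : q < 1)
    (ha0 : 0 < a) (ha1 : a < q⁻¹) (hb : b < q⁻¹) (hc : c ≠ 0)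
    (γ : ℝ) (hγ : γ = (1 + a * b * q ^ 2) - (a * c * q + b * q / c))
    (w : ℕ → ℝ) (hw : ∀ k, w k = qPoch q (b * q) k / qPoch q q k * (a * q) ^ k)
    (x lam : ℝ) (hlam : lam = a * q + 1 - 2 * Real.sqrt (a * q) * x)
    (y : ℕ → ℝ)
    (hy : ∀ k, y k =
      alSalamChihara q (c * Real.sqrt (a * q)) (b / c * Real.sqrt (q / a)) x k
        / Real.sqrt (qPoch q q k * qPoch q (b * q) k * w k)) :
    ∀ k : ℕ,
      a * q * (b * q ^ (k + 1) - 1) * (y (k + 1) - y k)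
        + (if k = 0 then 0 else (q ^ k - 1) * (y (k - 1) - y k))
        + γ * q ^ k * y k
      = lam * y k :=
  stmt_9_general q a b c hq hq1 ha0 hb hc γ hγ w hw x lam hlam y hy
end

section
/- Fix 0 < q < 1, 0 < a < q^{−1}, b < q^{−1} with bq < 1, and c ∈ ℝ ∖ {0} with (1−acq^{n+1})(1−bq^{n+1}/c) > 0 for all n ∈ ℕ. Define a_n^γ = (bq√(aq)/(1−bq))·((1−acq^{n+1})(1−bq^{n+1}/c)/(1−abq^{2n+2}))·√((1−q^{n+1})(1−aq^{n+1})(1−bq^{n+1})(1−abq^{n+1})/((1−abq^{2n+1})(1−abq^{2n+3}))) and b_n^γ = q^{−n}(1−acq^{n+1})(1−bq^{n+1}/c)(1−abq^{n+1})(1−bq^{n+1})/((1−bq)(1−abq^{2n+1})(1−abq^{2n+2})) + ab²q^{n+2}(1−acq^{n})(1−bq^{n}/c)(1−q^{n})(1−aq^{n})/((1−bq)(1−abq^{2n})(1−abq^{2n+1})). Then for every finitely supported sequence c : ℕ → ℝ (writing c_n for its terms): ∑_{n=0}^{∞} b_n^γ c_n² + 2∑_{n=0}^{∞} a_n^γ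 c_n c_{n+1} ≥ 0. -/
/-!
Write `b_n^γ = λ_n + μ_n` and `(a_n^γ)² = λ_n μ_{n+1}` with `λ_n, μ_n ≥ 0` and `μ_0 = 0`.
Shifting the index in `∑ μ_n c_n²` turns the form into
`∑_n (λ_n c_n² + 2 a_n^γ c_n c_{n+1} + μ_{n+1} c_{n+1}²)`, a sum of binary quadratic forms
with nonpositive discriminant.

The only sign that is not read off factor by factor is that of `1 - ab q^{2n+1}`, which may
be negative for `n = 0`; it always occurs together with `1 - ab q^{n+1}`, and the two factors
coincide when `n = 0`.
-/

lemma div_nonneg_of_mul_nonneg {K : Type*} [Field K] [LinearOrder K] [IsStrictOrderedRing K]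
    {x y : K} (h : 0 ≤ x * y) : 0 ≤ x / y := by
  rcases eq_or_ne y 0 with rfl | hy
  · simp
  · simpa [div_eq_mul_inv, mul_assoc, sq, hy] using mul_nonneg h (sq_nonneg y⁻¹)

lemma quadForm_nonneg_of_sq_le_mul {K : Type*} [Field K] [LinearOrder K] [IsStrictOrderedRing K]
    {l m t : K} (hl : 0 ≤ l) (hm : 0 ≤ m) (ht : t ^ 2 ≤ l * m) (x y : K) :
    0 ≤ l * x ^ 2 + m * y ^ 2 + 2 * (t * x * y) := by
  rcases hl.eq_or_lt with rfl | hl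
  · obtain rfl : t = 0 := by nlinarith [sq_nonneg t]
    nlinarith [sq_nonneg y]
  -- `l · (l x² + m y² + 2 t x y) = (l x + t y)² + (l m - t²) y²`
  · nlinarith [sq_nonneg (l * x + t * y), sq_nonneg y]

lemma Finsupp.summable_mul_right {α : Type*} (g : α → ℝ) (c : α →₀ ℝ) :
    Summable fun n => g n * c n :=
  summable_of_ne_finset_zero (s := c.support) fun n hn => by
    simp [Finsupp.notMem_support_iff.mp hn]

theorem jacobiForm_nonneg_of_birth_death (l m A B : ℕ → ℝ) (hl : ∀ n, 0 ≤ l n)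
    (hm : ∀ n, 0 ≤ m n) (hm0 : m 0 = 0) (hA : ∀ n, A n ^ 2 ≤ l n * m (n + 1))
    (hB : ∀ n, B n = l n + m n) (c : ℕ →₀ ℝ) :
    0 ≤ (∑' n, B n * c n ^ 2) + 2 * ∑' n, A n * c n * c (n + 1) := by
  have hsum : ∀ g : ℕ → ℝ, Summable fun n => g n * c n := (Finsupp.summable_mul_right · c)
  have hsq : ∀ g : ℕ → ℝ, Summable fun n => g n * c n ^ 2 := fun g => by
    simpa [sq, mul_assoc] using hsum fun n => g n * c n
  have hsq_shift : Summable fun n => m (n + 1) * c (n + 1) ^ 2 :=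
    (summable_nat_add_iff 1).mpr (hsq m)
  have hcross : Summable fun n => A n * c n * c (n + 1) := by
    simpa [mul_right_comm] using hsum fun n => A n * c (n + 1)
  have hshift : ∑' n, m n * c n ^ 2 = ∑' n, m (n + 1) * c (n + 1) ^ 2 := by
    rw [(hsq m).tsum_eq_zero_add, hm0, zero_mul, zero_add]
  calc 0 ≤ ∑' n, (l n * c n ^ 2 + m (n + 1) * c (n + 1) ^ 2 + 2 * (A n * c n * c (n + 1))) :=
        tsum_nonneg fun n => quadForm_nonneg_of_sq_le_mul (hl n) (hm _) (hA n) _ _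
    _ = _ := by
      simp_rw [hB, add_mul]
      rw [(hsq l).tsum_add (hsq m), hshift, ((hsq l).add hsq_shift).tsum_add (hcross.mul_left 2),
        (hsq l).tsum_add hsq_shift, tsum_mul_left]

lemma one_sub_mul_pow_pos {q x : ℝ} (hq : 0 ≤ q) (hq1 : q ≤ 1) (hx : x * q < 1) {k : ℕ}
    (hk : k ≠ 0) : 0 < 1 - x * q ^ k := by
  obtain ⟨j, rfl⟩ := Nat.exists_eq_succ_of_ne_zero hk
  have hqj : q ^ j ≤ 1 := pow_le_one₀ hq hq1
  rw [pow_succ', ← mul_assoc]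
  rcases le_or_gt (x * q) 0 with h | h
  · nlinarith [pow_nonneg hq j]
  · nlinarith

lemma one_sub_mul_mul_pow_pos {q a b : ℝ} (hq : 0 ≤ q) (hq1 : q ≤ 1) (ha : 0 ≤ a)
    (haq : a * q < 1) (hbq : b * q < 1) {k : ℕ} (hk : 2 ≤ k) : 0 < 1 - a * b * q ^ k := by
  obtain ⟨j, rfl⟩ : ∃ j, k = j + 1 := ⟨k - 1, by omega⟩
  have h : a * b * q * q < 1 := by nlinarith [mul_nonneg ha hq]
  simpa [pow_succ', mul_assoc] using one_sub_mul_pow_pos hq hq1 h (k := j) (by omega)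

lemma one_sub_mul_mul_pow_mul_nonneg {q a b : ℝ} (hq : 0 ≤ q) (hq1 : q ≤ 1) (ha : 0 ≤ a)
    (haq : a * q < 1) (hbq : b * q < 1) (n : ℕ) :
    0 ≤ (1 - a * b * q ^ (n + 1)) * (1 - a * b * q ^ (2 * n + 1)) := by
  rcases n with _ | n
  · simpa using mul_self_nonneg (1 - a * b * q)
  · exact mul_nonneg (one_sub_mul_mul_pow_pos hq hq1 ha haq hbq (by omega)).le
      (one_sub_mul_mul_pow_pos hq hq1 ha haq hbq (by omega)).le

noncomputable def birthRate (q a b c : ℝ) (n : ℕ) : ℝ :=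
  q ^ (-(n : ℤ)) * (1 - a * c * q ^ (n + 1)) * (1 - b * q ^ (n + 1) / c)
      * (1 - a * b * q ^ (n + 1)) * (1 - b * q ^ (n + 1))
    / ((1 - b * q) * (1 - a * b * q ^ (2 * n + 1)) * (1 - a * b * q ^ (2 * n + 2)))

noncomputable def deathRate (q a b c : ℝ) (n : ℕ) : ℝ :=
  a * b ^ 2 * q ^ (n + 2) * (1 - a * c * q ^ n) * (1 - b * q ^ n / c)
      * (1 - q ^ n) * (1 - a * q ^ n)
    / ((1 - b * q) * (1 - a * b * q ^ (2 * n)) * (1 - a * b * q ^ (2 * n + 1)))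

noncomputable def jacobiOffDiag (q a b c : ℝ) (n : ℕ) : ℝ :=
  b * q * Real.sqrt (a * q) / (1 - b * q)
    * ((1 - a * c * q ^ (n + 1)) * (1 - b * q ^ (n + 1) / c) / (1 - a * b * q ^ (2 * n + 2)))
    * Real.sqrt ((1 - q ^ (n + 1)) * (1 - a * q ^ (n + 1)) * (1 - b * q ^ (n + 1))
        * (1 - a * b * q ^ (n + 1))
        / ((1 - a * b * q ^ (2 * n + 1)) * (1 - a * b * q ^ (2 * n + 3))))

section Rates

variable {q a b c : ℝ}

lemma birthRate_nonneg (hq : 0 < q) (hq1 : q ≤ 1) (ha : 0 ≤ a) (haq : a * q < 1)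
    (hbq : b * q < 1) (n : ℕ)
    (hpos : 0 < (1 - a * c * q ^ (n + 1)) * (1 - b * q ^ (n + 1) / c)) :
    0 ≤ birthRate q a b c n := by
  have hb1 := one_sub_mul_pow_pos hq.le hq1 hbq (k := n + 1) (by omega)
  have hab2 := one_sub_mul_mul_pow_pos hq.le hq1 ha haq hbq (k := 2 * n + 2) (by omega)
  have hpair := one_sub_mul_mul_pow_mul_nonneg hq.le hq1 ha haq hbq n
  have hqn := zpow_pos hq (-(n : ℤ))
  apply div_nonneg_of_mul_nonneg
  calc (0 : ℝ) ≤ (q ^ (-(n : ℤ)) * ((1 - a * c * q ^ (n + 1)) * (1 - b * q ^ (n + 1) / c))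
        * (1 - b * q ^ (n + 1)) * (1 - b * q) * (1 - a * b * q ^ (2 * n + 2)))
        * ((1 - a * b * q ^ (n + 1)) * (1 - a * b * q ^ (2 * n + 1))) :=
        mul_nonneg (by positivity) hpair
    _ = _ := by ring

lemma deathRate_zero : deathRate q a b c 0 = 0 := by simp [deathRate]

lemma deathRate_nonneg (hq : 0 < q) (hq1 : q ≤ 1) (ha : 0 ≤ a) (haq : a * q < 1)
    (hbq : b * q < 1)
    (hpos : ∀ n : ℕ, 0 < (1 - a * c * q ^ (n + 1)) * (1 - b * q ^ (n + 1) / c)) (n : ℕ) :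
    0 ≤ deathRate q a b c n := by
  rcases n with _ | n
  · exact deathRate_zero.ge
  have h1 : 0 ≤ 1 - q ^ (n + 1) := sub_nonneg.mpr (pow_le_one₀ hq.le hq1)
  have ha1 := one_sub_mul_pow_pos hq.le hq1 haq (k := n + 1) (by omega)
  have hab1 := one_sub_mul_mul_pow_pos hq.le hq1 ha haq hbq (k := 2 * (n + 1)) (by omega)
  have hab2 := one_sub_mul_mul_pow_pos hq.le hq1 ha haq hbq (k := 2 * (n + 1) + 1) (by omega)
  have hposn := hpos n
  unfold deathRate
  calc (0 : ℝ) ≤ a * b ^ 2 * q ^ (n + 1 + 2)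
        * ((1 - a * c * q ^ (n + 1)) * (1 - b * q ^ (n + 1) / c))
        * (1 - q ^ (n + 1)) * (1 - a * q ^ (n + 1))
        / ((1 - b * q) * (1 - a * b * q ^ (2 * (n + 1)))
          * (1 - a * b * q ^ (2 * (n + 1) + 1))) := by
        positivity
    _ = _ := by ring

lemma sq_jacobiOffDiag (hq : 0 < q) (hq1 : q ≤ 1) (ha : 0 ≤ a) (haq : a * q < 1)
    (hbq : b * q < 1) (n : ℕ) :
    jacobiOffDiag q a b c n ^ 2 = birthRate q a b c n * deathRate q a b c (n + 1) := by
  have hab : ∀ {k}, 2 ≤ k → 0 < 1 - a * b * q ^ k :=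
    one_sub_mul_mul_pow_pos hq.le hq1 ha haq hbq
  have h1 : 0 ≤ 1 - q ^ (n + 1) := sub_nonneg.mpr (pow_le_one₀ hq.le hq1)
  have ha1 := one_sub_mul_pow_pos hq.le hq1 haq (k := n + 1) (by omega)
  have hb1 := one_sub_mul_pow_pos hq.le hq1 hbq (k := n + 1) (by omega)
  have hab3 := hab (k := 2 * n + 3) (by omega)
  have hpair := one_sub_mul_mul_pow_mul_nonneg hq.le hq1 ha haq hbq n
  have hS : 0 ≤ (1 - q ^ (n + 1)) * (1 - a * q ^ (n + 1)) * (1 - b * q ^ (n + 1))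
      * (1 - a * b * q ^ (n + 1))
      / ((1 - a * b * q ^ (2 * n + 1)) * (1 - a * b * q ^ (2 * n + 3))) := by
    apply div_nonneg_of_mul_nonneg
    calc (0 : ℝ) ≤ ((1 - q ^ (n + 1)) * (1 - a * q ^ (n + 1)) * (1 - b * q ^ (n + 1))
          * (1 - a * b * q ^ (2 * n + 3)))
          * ((1 - a * b * q ^ (n + 1)) * (1 - a * b * q ^ (2 * n + 1))) := by positivity
      _ = _ := by ring
  rcases eq_or_ne (1 - a * b * q ^ (2 * n + 1)) 0 with hd | hd
  · simp [jacobiOffDiag, birthRate, hd]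
  have := hab (k := 2 * n + 2) (by omega)
  have := hab (k := 2 * (n + 1)) (by omega)
  have := hab (k := 2 * (n + 1) + 1) (by omega)
  have hbq' : 0 < 1 - b * q := by linarith
  unfold jacobiOffDiag birthRate deathRate
  rw [mul_pow, mul_pow, div_pow, mul_pow, Real.sq_sqrt (by positivity), Real.sq_sqrt hS,
    zpow_neg, zpow_natCast]
  field_simp
  ring

end Rates

theorem stmt_15_general (q a b c : ℝ) (hq : 0 < q) (hq1 : q < 1)
    (ha0 : 0 < a) (ha1 : a < q⁻¹) (hbq : b * q < 1)
    (hpos : ∀ n : ℕ, 0 < (1 - a * c * q ^ (n + 1)) * (1 - b * q ^ (n + 1) / c))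
    (A B : ℕ → ℝ)
    (hA : ∀ n : ℕ, A n =
      b * q * Real.sqrt (a * q) / (1 - b * q)
        * ((1 - a * c * q ^ (n + 1)) * (1 - b * q ^ (n + 1) / c)
            / (1 - a * b * q ^ (2 * n + 2)))
        * Real.sqrt ((1 - q ^ (n + 1)) * (1 - a * q ^ (n + 1)) * (1 - b * q ^ (n + 1))
            * (1 - a * b * q ^ (n + 1))
            / ((1 - a * b * q ^ (2 * n + 1)) * (1 - a * b * q ^ (2 * n + 3)))))
    (hB : ∀ n : ℕ, B n =
      q ^ (-(n : ℤ)) * (1 - a * c * q ^ (n + 1)) * (1 - b * q ^ (n + 1) / c)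
          * (1 - a * b * q ^ (n + 1)) * (1 - b * q ^ (n + 1))
          / ((1 - b * q) * (1 - a * b * q ^ (2 * n + 1)) * (1 - a * b * q ^ (2 * n + 2)))
        + a * b ^ 2 * q ^ (n + 2) * (1 - a * c * q ^ n) * (1 - b * q ^ n / c)
            * (1 - q ^ n) * (1 - a * q ^ n)
          / ((1 - b * q) * (1 - a * b * q ^ (2 * n)) * (1 - a * b * q ^ (2 * n + 1)))) :
    ∀ c' : ℕ →₀ ℝ,
      0 ≤ (∑' n : ℕ, B n * c' n ^ 2) + 2 * ∑' n : ℕ, A n * c' n * c' (n + 1) := by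
  have haq : a * q < 1 := (lt_div_iff₀ hq).mp (by rwa [one_div])
  have hA_sq (n : ℕ) : A n ^ 2 = birthRate q a b c n * deathRate q a b c (n + 1) := by
    rw [show A n = jacobiOffDiag q a b c n from hA n,
      sq_jacobiOffDiag hq hq1.le ha0.le haq hbq]
  exact jacobiForm_nonneg_of_birth_death (birthRate q a b c) (deathRate q a b c) A B
    (fun n => birthRate_nonneg hq hq1.le ha0.le haq hbq n (hpos n))
    (deathRate_nonneg hq hq1.le ha0.le haq hbq hpos) deathRate_zero
    (fun n => (hA_sq n).le) hB

/-- The Jacobi quadratic form of the 'shift in b' tridiagonalisation coefficients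
`a_n^γ`, `b_n^γ` is nonnegative on finitely supported sequences; this is the key step
showing the spectrum of the self-adjoint closure of `T^γ` is contained in `[0,∞)`. -/
theorem stmt_15 (q a b c : ℝ) (hq : 0 < q) (hq1 : q < 1)
    (ha0 : 0 < a) (ha1 : a < q⁻¹) (hb : b < q⁻¹) (hbq : b * q < 1)
    (hc : c ≠ 0)
    (hpos : ∀ n : ℕ, 0 < (1 - a * c * q ^ (n + 1)) * (1 - b * q ^ (n + 1) / c))
    (A B : ℕ → ℝ)
    (hA : ∀ n : ℕ, A n =
      b * q * Real.sqrt (a * q) / (1 - b * q)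
        * ((1 - a * c * q ^ (n + 1)) * (1 - b * q ^ (n + 1) / c)
            / (1 - a * b * q ^ (2 * n + 2)))
        * Real.sqrt ((1 - q ^ (n + 1)) * (1 - a * q ^ (n + 1)) * (1 - b * q ^ (n + 1))
            * (1 - a * b * q ^ (n + 1))
            / ((1 - a * b * q ^ (2 * n + 1)) * (1 - a * b * q ^ (2 * n + 3)))))
    (hB : ∀ n : ℕ, B n =
      q ^ (-(n : ℤ)) * (1 - a * c * q ^ (n + 1)) * (1 - b * q ^ (n + 1) / c)
          * (1 - a * b * q ^ (n + 1)) * (1 - b * q ^ (n + 1))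
          / ((1 - b * q) * (1 - a * b * q ^ (2 * n + 1)) * (1 - a * b * q ^ (2 * n + 2)))
        + a * b ^ 2 * q ^ (n + 2) * (1 - a * c * q ^ n) * (1 - b * q ^ n / c)
            * (1 - q ^ n) * (1 - a * q ^ n)
          / ((1 - b * q) * (1 - a * b * q ^ (2 * n)) * (1 - a * b * q ^ (2 * n + 1)))) :
    ∀ c' : ℕ →₀ ℝ,
      0 ≤ (∑' n : ℕ, B n * c' n ^ 2) + 2 * ∑' n : ℕ, A n * c' n * c' (n + 1) :=
  stmt_15_general q a b c hq hq1 ha0 ha1 hbq hpos A B hA hB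
end

section
/- Fix 0 < q < 1, 0 < a < q^{−1}, b < q^{−1} with bq < 1, and c ∈ ℝ ∖ {0}; set γ = (1+abq²) − (acq + bq/c) and w_k = ((bq;q)_k/(q;q)_k)(aq)^k. Let λ ∈ ℝ and let (p_k)_{k∈ℕ} be real numbers with the convention p_{−1} := 0. Define y : ℕ → ℝ by y(k) = p_k/√(w_k). Then the following are equivalent: (i) for all k ∈ ℕ, (a(bq^{k+2}−1)(1−bq^{k+1})/(q^k(1−bq)))·(y(k+1)−y(k)) + ((q^k−1)(1−bq^{k+1})/(q^k(1−bq)))·(y(k−1)−y(k)) + γ·((1−bq^{k+1})/(1−bq))·y(k) = λ·y(k) (with the term containing y(k−1) interpreted as 0 when k = 0); (ii) for all k ∈ ℕ, (1−bq)·λ·p_k = a_k p_{k+1} + b_k p_k + a_{k−1} p_{k−1}, where a_k = −√a · q^{−k−1/2} (1−bq^{k+2}) √((1−bq^{k+1})(1−q^{k+1})) and b_k = q^{−k}(1−bq^{k+1})·(a(1−cq^{k+1}) + (1−bq^{k+1}/c)). -/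
lemma aux1 (a b q sa sq U V Q : ℝ) (hQ : Q ≠ 0) (hsa : sa ≠ 0) (hsq : sq ≠ 0) (hU0 : U ≠ 0)
    (hbq : 1 - b*q ≠ 0) (hsa2 : sa^2 = a) (hsq2 : sq^2 = q) (hU2 : U^2 = 1 - b*q*Q) :
    (1-b*q) * (a*(b*q^2*Q-1)*(1-b*q*Q)/(Q*(1-b*q))) * (V/(sa*sq*U)) =
      -sa * ((Q*sq)⁻¹) * (1-b*q^2*Q) * (U*V) := by
  subst hsa2 hsq2
  rw [show 1 - b*sq^2*Q = U^2 from hU2.symm]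
  field_simp
  ring

lemma aux2 (b q sa sq U V Q : ℝ) (hQ : Q ≠ 0) (hsq0 : sq ≠ 0) (hV0 : V ≠ 0)
    (hbq : 1 - b*q ≠ 0) (hsq2 : sq^2 = q) (hV2 : V^2 = 1 - q*Q) :
    (1-b*q) * ((q*Q-1)*(1-b*q^2*Q)/((q*Q)*(1-b*q))) * (sa*sq*U/V) =
      -sa * ((Q*sq)⁻¹) * (1-b*q^2*Q) * (U*V) := by
  subst hsq2
  rw [show sq^2*Q-1 = -V^2 by rw [hV2]; ring]
  field_simp

lemma aux3 (a b c q γ Q : ℝ) (hQ : Q ≠ 0) (hq : q ≠ 0) (hc : c ≠ 0) (hbq : 1 - b*q ≠ 0)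
    (hγ : γ = (1 + a * b * q ^ 2) - (a * c * q + b * q / c)) :
    (1-b*q)*(γ*((1-b*q*Q)/(1-b*q)) - a*(b*q^2*Q-1)*(1-b*q*Q)/(Q*(1-b*q))
        - (Q-1)*(1-b*q*Q)/(Q*(1-b*q)))
      = Q⁻¹*(1-b*q*Q)*(a*(1-c*q*Q) + (1-b*q*Q/c)) := by
  subst hγ
  field_simp
  ring

/-- A function `y(k) = p_k/√(w_k)` on `q^ℕ` is an eigenfunction, with eigenvalue `λ`,
of the unbounded operator `T^γ = r·(L^{(a,bq)} + γ)` if and only if the coefficients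
`p_k` satisfy the symmetric three-term recurrence with the stated coefficients. -/
theorem stmt_16 (q a b c : ℝ) (hq : 0 < q) (hq1 : q < 1)
    (ha0 : 0 < a) (ha1 : a < q⁻¹) (hb : b < q⁻¹) (hbq : b * q < 1) (hc : c ≠ 0)
    (γ : ℝ) (hγ : γ = (1 + a * b * q ^ 2) - (a * c * q + b * q / c))
    (w : ℕ → ℝ) (hw : ∀ k, w k = qPoch q (b * q) k / qPoch q q k * (a * q) ^ k)
    (lam : ℝ) (p : ℕ → ℝ)
    (y : ℕ → ℝ) (hy : ∀ k, y k = p k / Real.sqrt (w k)) :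
    (∀ k : ℕ,
        a * (b * q ^ (k + 2) - 1) * (1 - b * q ^ (k + 1)) / (q ^ k * (1 - b * q))
            * (y (k + 1) - y k)
          + (if k = 0 then 0
             else (q ^ k - 1) * (1 - b * q ^ (k + 1)) / (q ^ k * (1 - b * q))
                * (y (k - 1) - y k))
          + γ * ((1 - b * q ^ (k + 1)) / (1 - b * q)) * y k
        = lam * y k)
    ↔
    (∀ k : ℕ,
        (1 - b * q) * lam * p k
          = (-(Real.sqrt a) * q ^ (-(k : ℝ) - 1 / 2) * (1 - b * q ^ (k + 2))
                * Real.sqrt ((1 - b * q ^ (k + 1)) * (1 - q ^ (k + 1)))) * p (k + 1)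
            + (q ^ (-(k : ℤ)) * (1 - b * q ^ (k + 1))
                * (a * (1 - c * q ^ (k + 1)) + (1 - b * q ^ (k + 1) / c))) * p k
            + (if k = 0 then 0
               else (-(Real.sqrt a) * q ^ (-((k : ℝ) - 1) - 1 / 2) * (1 - b * q ^ (k + 1))
                  * Real.sqrt ((1 - b * q ^ k) * (1 - q ^ k))) * p (k - 1))) := by
  have hbq1 : (0:ℝ) < 1 - b * q := by linarith
  have hbq0 : (1:ℝ) - b * q ≠ 0 := ne_of_gt hbq1
  have hQ : ∀ k : ℕ, (0:ℝ) < q ^ k := fun k => pow_pos hq k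
  have hu : ∀ k : ℕ, (0:ℝ) < 1 - b * q ^ (k+1) := by
    intro k
    rw [pow_succ']
    nlinarith [mul_pos hbq1 (pow_pos hq k), pow_le_one₀ hq.le hq1.le (n := k), pow_pos hq k]
  have hv : ∀ k : ℕ, (0:ℝ) < 1 - q ^ (k+1) := by
    intro k; have := pow_lt_one₀ hq.le hq1 (by omega : k+1 ≠ 0); linarith
  -- weights are positive
  have hwpos : ∀ k, 0 < w k := by
    intro k
    rw [hw]
    refine mul_pos (div_pos ?_ ?_) (pow_pos (mul_pos ha0 hq) k) <;>
      refine Finset.prod_pos fun j _ => ?_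
    · have := hu j; rw [show b*q^(j+1) = b*q*q^j by ring] at this; exact this
    · have := hv j; rw [show q^(j+1) = q*q^j by ring] at this; exact this
  have hwratio : ∀ k, w (k+1) = w k * (a*q*(1 - b*q^(k+1))/(1 - q^(k+1))) := by
    intro k
    rw [hw, hw,
      show qPoch q (b*q) (k+1) = qPoch q (b*q) k * (1 - b*q^(k+1)) by
        rw [qPoch, Finset.prod_range_succ, ← qPoch]; ring_nf,
      show qPoch q q (k+1) = qPoch q q k * (1 - q^(k+1)) by
        rw [qPoch, Finset.prod_range_succ, ← qPoch]; ring_nf]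
    have h1 : qPoch q q k ≠ 0 := by
      refine ne_of_gt (Finset.prod_pos fun j _ => ?_)
      have := hv j; rw [show q^(j+1) = q*q^j by ring] at this; exact this
    have h2 : (1:ℝ) - q^(k+1) ≠ 0 := ne_of_gt (hv k)
    field_simp
    ring
  -- abbreviations for the square roots
  set sa := Real.sqrt a with hsadef
  set sq := Real.sqrt q with hsqdef
  have hsa0 : sa ≠ 0 := ne_of_gt (Real.sqrt_pos.2 ha0)
  have hsq0 : sq ≠ 0 := ne_of_gt (Real.sqrt_pos.2 hq)
  have hsa2 : sa^2 = a := Real.sq_sqrt ha0.le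
  have hsq2 : sq^2 = q := Real.sq_sqrt hq.le
  have hU0 : ∀ k : ℕ, Real.sqrt (1 - b*q^(k+1)) ≠ 0 := fun k => ne_of_gt (Real.sqrt_pos.2 (hu k))
  have hV0 : ∀ k : ℕ, Real.sqrt (1 - q^(k+1)) ≠ 0 := fun k => ne_of_gt (Real.sqrt_pos.2 (hv k))
  have hU2 : ∀ k : ℕ, (Real.sqrt (1 - b*q^(k+1)))^2 = 1 - b*q^(k+1) := fun k => Real.sq_sqrt (hu k).le
  have hV2 : ∀ k : ℕ, (Real.sqrt (1 - q^(k+1)))^2 = 1 - q^(k+1) := fun k => Real.sq_sqrt (hv k).le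
  have hS0 : ∀ k, Real.sqrt (w k) ≠ 0 := fun k => ne_of_gt (Real.sqrt_pos.2 (hwpos k))
  -- splitting the square roots in the statement
  have hsplit : ∀ m : ℕ, Real.sqrt ((1 - b*q^(m+1)) * (1 - q^(m+1)))
      = Real.sqrt (1 - b*q^(m+1)) * Real.sqrt (1 - q^(m+1)) := fun m =>
    Real.sqrt_mul' _ (hv m).le
  have hsplit' : ∀ m : ℕ, Real.sqrt ((1 - b*q^m) * (1 - q^m))
      = Real.sqrt (1 - b*q^m) * Real.sqrt (1 - q^m) := by
    intro m
    rcases m with _ | m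
    · simp
    · exact hsplit m
  have hrpow : ∀ k : ℕ, q ^ (-(k:ℝ) - 1/2) = (q ^ k * sq)⁻¹ := by
    intro k
    rw [hsqdef, Real.sqrt_eq_rpow, show (q:ℝ)^k = q ^ ((k:ℕ):ℝ) from (Real.rpow_natCast q k).symm,
      ← Real.rpow_add hq, ← Real.rpow_neg hq.le]
    congr 1; ring
  have hrpow2 : ∀ n : ℕ, q ^ (-((((n+1):ℕ):ℝ) - 1) - 1/2) = (q ^ n * sq)⁻¹ := by
    intro n
    rw [show (-((((n+1):ℕ):ℝ) - 1) - 1/2) = (-((n:ℕ):ℝ) - 1/2) by push_cast; ring]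
    exact hrpow n
  have hzpow : ∀ k : ℕ, q ^ (-(k:ℤ)) = (q^k)⁻¹ := by
    intro k; rw [zpow_neg, zpow_natCast]
  -- the sqrt of the weight ratio
  have hSratio : ∀ k, Real.sqrt (w (k+1))
      = Real.sqrt (w k) * (sa * sq * Real.sqrt (1 - b*q^(k+1)) / Real.sqrt (1 - q^(k+1))) := by
    intro k
    rw [hwratio k, Real.sqrt_mul (hwpos k).le,
      show a*q*(1 - b*q^(k+1))/(1 - q^(k+1)) = a*(q*((1 - b*q^(k+1))/(1 - q^(k+1)))) by ring,
      Real.sqrt_mul ha0.le, Real.sqrt_mul hq.le, Real.sqrt_div (hu k).le]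
    rw [hsadef, hsqdef]; ring
  have hyk : ∀ k, Real.sqrt (w k) * y k = p k := by
    intro k; rw [hy k, mul_comm, div_mul_cancel₀ _ (hS0 k)]
  have hAy : ∀ k, Real.sqrt (w k) * y (k+1)
      = p (k+1) * (Real.sqrt (1 - q^(k+1))/(sa*sq*Real.sqrt (1 - b*q^(k+1)))) := by
    intro k
    rw [hy (k+1), hSratio k]
    field_simp [hS0 k, hU0 k, hV0 k]
  have hBy : ∀ n, Real.sqrt (w (n+1)) * y n
      = p n * (sa*sq*Real.sqrt (1 - b*q^(n+1))/Real.sqrt (1 - q^(n+1))) := by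
    intro n
    rw [hy n, hSratio n]
    field_simp [hS0 n, hU0 n, hV0 n]
  refine forall_congr' fun k => ?_
  have hm : (1 - b*q) * Real.sqrt (w k) ≠ 0 := mul_ne_zero hbq0 (hS0 k)
  have I1 := aux1 a b q sa sq (Real.sqrt (1 - b*q^(k+1))) (Real.sqrt (1 - q^(k+1))) (q^k)
    (ne_of_gt (hQ k)) hsa0 hsq0 (hU0 k) hbq0 hsa2 hsq2 ((hU2 k).trans (by ring))
  have I3 := aux3 a b c q γ (q^k) (ne_of_gt (hQ k)) (ne_of_gt hq) hc hbq0 hγ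
  rcases k with _ | n
  · -- k = 0
    simp only [reduceIte, hsplit, hrpow, hzpow]
    constructor
    · intro h
      linear_combination ((1-b*q) * (a*(b*q^2-1)*(1-b*q^1)/(1*(1-b*q)))) * hAy 0
        + ((1-b*q)*(γ*((1-b*q^1)/(1-b*q)) - a*(b*q^2-1)*(1-b*q^1)/(1*(1-b*q))
            - (1-1)*(1-b*q^1)/(1*(1-b*q)) - lam)) * hyk 0
        + p 1 * I1 + p 0 * I3
        - ((1-b*q) * Real.sqrt (w 0)) * h
    · intro h
      refine mul_left_cancel₀ hm ?_
      linear_combination ((1-b*q) * (a*(b*q^2-1)*(1-b*q^1)/(1*(1-b*q)))) * hAy 0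
        + ((1-b*q)*(γ*((1-b*q^1)/(1-b*q)) - a*(b*q^2-1)*(1-b*q^1)/(1*(1-b*q))
            - (1-1)*(1-b*q^1)/(1*(1-b*q)) - lam)) * hyk 0
        + p 1 * I1 + p 0 * I3
        - h
  · -- k = n+1
    have I2 := aux2 b q sa sq (Real.sqrt (1 - b*q^(n+1))) (Real.sqrt (1 - q^(n+1))) (q^n)
      (ne_of_gt (hQ n)) hsq0 (hV0 n) hbq0 hsq2 ((hV2 n).trans (by ring))
    simp only [Nat.succ_ne_zero, if_false, Nat.add_sub_cancel, hsplit, hrpow, hrpow2, hzpow]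
    constructor
    · intro h
      linear_combination
        ((1-b*q) * (a*(b*q^(n+1+2)-1)*(1-b*q^(n+1+1))/(q^(n+1)*(1-b*q)))) * hAy (n+1)
        + ((1-b*q) * ((q^(n+1)-1)*(1-b*q^(n+1+1))/(q^(n+1)*(1-b*q)))) * hBy n
        + ((1-b*q)*(γ*((1-b*q^(n+1+1))/(1-b*q))
            - a*(b*q^(n+1+2)-1)*(1-b*q^(n+1+1))/(q^(n+1)*(1-b*q))
            - (q^(n+1)-1)*(1-b*q^(n+1+1))/(q^(n+1)*(1-b*q)) - lam)) * hyk (n+1)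
        + p (n+2) * I1 + p n * I2 + p (n+1) * I3
        - ((1-b*q) * Real.sqrt (w (n+1))) * h
    · intro h
      refine mul_left_cancel₀ hm ?_
      linear_combination
        ((1-b*q) * (a*(b*q^(n+1+2)-1)*(1-b*q^(n+1+1))/(q^(n+1)*(1-b*q)))) * hAy (n+1)
        + ((1-b*q) * ((q^(n+1)-1)*(1-b*q^(n+1+1))/(q^(n+1)*(1-b*q)))) * hBy n
        + ((1-b*q)*(γ*((1-b*q^(n+1+1))/(1-b*q))
            - a*(b*q^(n+1+2)-1)*(1-b*q^(n+1+1))/(q^(n+1)*(1-b*q))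
            - (q^(n+1)-1)*(1-b*q^(n+1+1))/(q^(n+1)*(1-b*q)) - lam)) * hyk (n+1)
        + p (n+2) * I1 + p n * I2 + p (n+1) * I3
        - h
end
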